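/- arXiv:2311.16793 — 4 statements merged into one kernel-verified Lean document; each statement's English description precedes it below -/
import Mathlib

section
/- Under the latent factor model M̌ = Γ U + ε with Γ Γᵀ + Σ_ε invertible, Δ = (Γ Γᵀ + Σ_ε)⁻¹ Γ, L = Δᵀ M̌, and ψ = φᵀ(U − L) + η, the new error term ψ is uncorrelated with M̌ and with L: E[ψ · M̌] = 0 in ℝ^p and E[ψ · L] = 0 in ℝ^t. -/
open MeasureTheory Matrix

/-!
Second moments are bilinear: `E[(A X) (B Y)ᵀ] = A E[X Yᵀ] Bᵀ`. In the factor model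
`E[M̌ Uᵀ] = Γ` and `E[M̌ M̌ᵀ] = Γ Γᵀ + Σ_ε`, so `E[M̌ Lᵀ] = E[M̌ M̌ᵀ] Δ = Γ` as well: `L` is the
linear projection of `U` on `M̌`, and the residual `U - L` is uncorrelated with `M̌`. So is `η`,
hence so is `ψ`, and then so is every linear image of `M̌`, in particular `L`.
-/

structure HasCrossMoment {Ω ι κ : Type*} [MeasurableSpace Ω] (μ : Measure Ω)
    (X : Ω → ι → ℝ) (Y : Ω → κ → ℝ) (C : Matrix ι κ ℝ) : Prop where
  integrable : ∀ i j, Integrable (fun ω => X ω i * Y ω j) μ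
  integral_eq : ∀ i j, ∫ ω, X ω i * Y ω j ∂μ = C i j

namespace HasCrossMoment

variable {Ω ι ι' κ κ' : Type*} [MeasurableSpace Ω] {μ : Measure Ω}
  {X X' : Ω → ι → ℝ} {Y Y' : Ω → κ → ℝ} {C C' : Matrix ι κ ℝ}

theorem swap (h : HasCrossMoment μ X Y C) : HasCrossMoment μ Y X Cᵀ where
  integrable j i := by simpa only [mul_comm] using h.integrable i j
  integral_eq j i := by simpa only [mul_comm, transpose_apply] using h.integral_eq i j

theorem of_matrix_eq (h : HasCrossMoment μ X Y C) (hC : C = C') : HasCrossMoment μ X Y C' :=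
  hC ▸ h

theorem add_left (h : HasCrossMoment μ X Y C) (h' : HasCrossMoment μ X' Y C') :
    HasCrossMoment μ (fun ω => X ω + X' ω) Y (C + C') where
  integrable i j := by
    simp only [Pi.add_apply, add_mul]
    exact (h.integrable i j).add (h'.integrable i j)
  integral_eq i j := by
    simp only [Pi.add_apply, add_mul, integral_add (h.integrable i j) (h'.integrable i j),
      h.integral_eq, h'.integral_eq, Matrix.add_apply]

theorem sub_left (h : HasCrossMoment μ X Y C) (h' : HasCrossMoment μ X' Y C') :
    HasCrossMoment μ (fun ω => X ω - X' ω) Y (C - C') where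
  integrable i j := by
    simp only [Pi.sub_apply, sub_mul]
    exact (h.integrable i j).sub (h'.integrable i j)
  integral_eq i j := by
    simp only [Pi.sub_apply, sub_mul, integral_sub (h.integrable i j) (h'.integrable i j),
      h.integral_eq, h'.integral_eq, Matrix.sub_apply]

theorem mulVec_left [Fintype ι] (h : HasCrossMoment μ X Y C) (A : Matrix ι' ι ℝ) :
    HasCrossMoment μ (fun ω => A *ᵥ X ω) Y (A * C) := by
  have expand : ∀ i j,
      (fun ω => (A *ᵥ X ω) i * Y ω j) = fun ω => ∑ k, A i k * (X ω k * Y ω j) := by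
    intro i j
    funext ω
    simp only [mulVec, dotProduct, Finset.sum_mul, mul_assoc]
  refine ⟨fun i j => ?_, fun i j => ?_⟩
  · rw [expand]
    exact integrable_finsetSum _ fun k _ => (h.integrable k j).const_mul _
  · rw [expand, integral_finsetSum _ fun k _ => (h.integrable k j).const_mul _]
    simp only [integral_const_mul, h.integral_eq, mul_apply]

theorem add_right (h : HasCrossMoment μ X Y C) (h' : HasCrossMoment μ X Y' C') :
    HasCrossMoment μ X (fun ω => Y ω + Y' ω) (C + C') :=
  ((h.swap.add_left h'.swap).swap).of_matrix_eq (by simp)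

theorem sub_right (h : HasCrossMoment μ X Y C) (h' : HasCrossMoment μ X Y' C') :
    HasCrossMoment μ X (fun ω => Y ω - Y' ω) (C - C') :=
  ((h.swap.sub_left h'.swap).swap).of_matrix_eq (by simp)

theorem mulVec_right [Fintype κ] (h : HasCrossMoment μ X Y C) (B : Matrix κ' κ ℝ) :
    HasCrossMoment μ X (fun ω => B *ᵥ Y ω) (C * Bᵀ) :=
  ((h.swap.mulVec_left B).swap).of_matrix_eq (by simp)

end HasCrossMoment

section FactorModel

variable {Ω ι κ : Type*} [MeasurableSpace Ω] {μ : Measure Ω} [Fintype κ] [DecidableEq κ]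
  {U : Ω → κ → ℝ} {ε : Ω → ι → ℝ} {Sε : Matrix ι ι ℝ}

theorem hasCrossMoment_factorModel_factor (Γ : Matrix ι κ ℝ) (hUU : HasCrossMoment μ U U 1)
    (hUε : HasCrossMoment μ U ε 0) :
    HasCrossMoment μ (fun ω => Γ *ᵥ U ω + ε ω) U Γ :=
  ((hUU.mulVec_left Γ).add_left hUε.swap).of_matrix_eq (by simp)

theorem hasCrossMoment_factorModel_self (Γ : Matrix ι κ ℝ) (hUU : HasCrossMoment μ U U 1)
    (hεε : HasCrossMoment μ ε ε Sε) (hUε : HasCrossMoment μ U ε 0) :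
    HasCrossMoment μ (fun ω => Γ *ᵥ U ω + ε ω) (fun ω => Γ *ᵥ U ω + ε ω) (Γ * Γᵀ + Sε) := by
  have hUM := (hasCrossMoment_factorModel_factor Γ hUU hUε).swap
  have hεM : HasCrossMoment μ ε (fun ω => Γ *ᵥ U ω + ε ω) Sε :=
    ((hUε.swap.mulVec_right Γ).add_right hεε).of_matrix_eq (by simp)
  exact (hUM.mulVec_left Γ).add_left hεM

end FactorModel

theorem HasCrossMoment.sub_linearPrediction {Ω ι κ : Type*} [MeasurableSpace Ω] {μ : Measure Ω}
    [Fintype ι] [DecidableEq ι] {M : Ω → ι → ℝ} {Y : Ω → κ → ℝ} {C : Matrix ι ι ℝ}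
    {G : Matrix ι κ ℝ} (hMM : HasCrossMoment μ M M C) (hMY : HasCrossMoment μ M Y G)
    (hC : IsUnit C.det) :
    HasCrossMoment μ M (fun ω => Y ω - (C⁻¹ * G)ᵀ *ᵥ M ω) 0 :=
  (hMY.sub_right (hMM.mulVec_right _)).of_matrix_eq <| by
    rw [transpose_transpose, ← Matrix.mul_assoc, mul_nonsing_inv _ hC, Matrix.one_mul, sub_self]

theorem new_error_uncorrelated_general
    {p t : ℕ} (Γ : Matrix (Fin p) (Fin t) ℝ) (Sε : Matrix (Fin p) (Fin p) ℝ)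
    {Ω : Type*} [MeasurableSpace Ω] (μ : Measure Ω)
    (U : Ω → Fin t → ℝ) (ε : Ω → Fin p → ℝ)
    (hUU : ∀ i j, Integrable (fun ω => U ω i * U ω j) μ)
    (hεε : ∀ i j, Integrable (fun ω => ε ω i * ε ω j) μ)
    (hUε : ∀ i j, Integrable (fun ω => U ω i * ε ω j) μ)
    (hEUU : ∀ i j, ∫ ω, U ω i * U ω j ∂μ = (1 : Matrix (Fin t) (Fin t) ℝ) i j)
    (hEεε : ∀ i j, ∫ ω, ε ω i * ε ω j ∂μ = Sε i j)
    (hEUε : ∀ i j, ∫ ω, U ω i * ε ω j ∂μ = 0)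
    (M : Ω → Fin p → ℝ) (hM : ∀ ω, M ω = Γ *ᵥ U ω + ε ω)
    (hinv : IsUnit (Γ * Γᵀ + Sε).det)
    (Δ : Matrix (Fin p) (Fin t) ℝ) (hΔ : Δ = (Γ * Γᵀ + Sε)⁻¹ * Γ)
    (L : Ω → Fin t → ℝ) (hL : ∀ ω, L ω = Δᵀ *ᵥ M ω)
    (η : Ω → ℝ)
    (hηU : ∀ i, Integrable (fun ω => η ω * U ω i) μ)
    (hηε : ∀ i, Integrable (fun ω => η ω * ε ω i) μ)
    (hEηU : ∀ i, ∫ ω, η ω * U ω i ∂μ = 0)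
    (hEηε : ∀ i, ∫ ω, η ω * ε ω i ∂μ = 0)
    (φ : Fin t → ℝ)
    (ψ : Ω → ℝ) (hψ : ∀ ω, ψ ω = φ ⬝ᵥ (U ω - L ω) + η ω) :
    (∀ i, ∫ ω, ψ ω * M ω i ∂μ = 0) ∧ (∀ j, ∫ ω, ψ ω * L ω j ∂μ = 0) := by
  have hM' : M = fun ω => Γ *ᵥ U ω + ε ω := funext hM
  have hL' : L = fun ω => Δᵀ *ᵥ M ω := funext hL
  -- scalar random variables enter as `Unit`-indexed random vectors
  have hψ' : (fun ω (_ : Unit) => ψ ω) =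
      fun ω => replicateRow Unit φ *ᵥ (U ω - L ω) + fun _ => η ω :=
    funext fun ω => funext fun _ => hψ ω
  have hUU' : HasCrossMoment μ U U 1 := ⟨hUU, hEUU⟩
  have hUε' : HasCrossMoment μ U ε 0 := ⟨hUε, hEUε⟩
  have hηU' : HasCrossMoment μ (fun ω (_ : Unit) => η ω) U 0 := ⟨fun _ => hηU, fun _ => hEηU⟩
  have hηε' : HasCrossMoment μ (fun ω (_ : Unit) => η ω) ε 0 := ⟨fun _ => hηε, fun _ => hEηε⟩
  have hMU : HasCrossMoment μ M U Γ := hM' ▸ hasCrossMoment_factorModel_factor Γ hUU' hUε'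
  have hMM : HasCrossMoment μ M M (Γ * Γᵀ + Sε) :=
    hM' ▸ hasCrossMoment_factorModel_self Γ hUU' ⟨hεε, hEεε⟩ hUε'
  have hMη : HasCrossMoment μ M (fun ω _ => η ω) 0 :=
    hM' ▸ ((hηU'.mulVec_right Γ).add_right hηε').swap.of_matrix_eq (by simp)
  have hMres : HasCrossMoment μ M (fun ω => U ω - L ω) 0 :=
    hL' ▸ hΔ ▸ hMM.sub_linearPrediction hMU hinv
  have hMψ : HasCrossMoment μ M (fun ω _ => ψ ω) 0 :=
    hψ' ▸ ((hMres.mulVec_right _).add_right hMη).of_matrix_eq (by simp)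
  have hLψ : HasCrossMoment μ L (fun ω _ => ψ ω) 0 :=
    hL' ▸ (hMψ.mulVec_left Δᵀ).of_matrix_eq (by simp)
  exact ⟨fun i => hMψ.swap.integral_eq () i, fun j => hLψ.swap.integral_eq () j⟩

/-- With L = Δᵀ M̌ and ψ = φᵀ(U − L) + η, the new error term ψ is
uncorrelated with M̌ and with L: E[ψ · M̌] = 0 and E[ψ · L] = 0. -/
theorem new_error_uncorrelated
    {p t : ℕ} (Γ : Matrix (Fin p) (Fin t) ℝ) (Sε : Matrix (Fin p) (Fin p) ℝ)
    {Ω : Type*} [MeasurableSpace Ω] (μ : Measure Ω) [IsProbabilityMeasure μ]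
    (U : Ω → Fin t → ℝ) (ε : Ω → Fin p → ℝ)
    (hUU : ∀ i j, Integrable (fun ω => U ω i * U ω j) μ)
    (hεε : ∀ i j, Integrable (fun ω => ε ω i * ε ω j) μ)
    (hUε : ∀ i j, Integrable (fun ω => U ω i * ε ω j) μ)
    (hEUU : ∀ i j, ∫ ω, U ω i * U ω j ∂μ = (1 : Matrix (Fin t) (Fin t) ℝ) i j)
    (hEεε : ∀ i j, ∫ ω, ε ω i * ε ω j ∂μ = Sε i j)
    (hEUε : ∀ i j, ∫ ω, U ω i * ε ω j ∂μ = 0)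
    (M : Ω → Fin p → ℝ) (hM : ∀ ω, M ω = Γ *ᵥ U ω + ε ω)
    (hinv : IsUnit (Γ * Γᵀ + Sε).det)
    (Δ : Matrix (Fin p) (Fin t) ℝ) (hΔ : Δ = (Γ * Γᵀ + Sε)⁻¹ * Γ)
    (L : Ω → Fin t → ℝ) (hL : ∀ ω, L ω = Δᵀ *ᵥ M ω)
    (η : Ω → ℝ)
    (hηU : ∀ i, Integrable (fun ω => η ω * U ω i) μ)
    (hηε : ∀ i, Integrable (fun ω => η ω * ε ω i) μ)
    (hEηU : ∀ i, ∫ ω, η ω * U ω i ∂μ = 0)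
    (hEηε : ∀ i, ∫ ω, η ω * ε ω i ∂μ = 0)
    (φ : Fin t → ℝ)
    (ψ : Ω → ℝ) (hψ : ∀ ω, ψ ω = φ ⬝ᵥ (U ω - L ω) + η ω) :
    (∀ i, ∫ ω, ψ ω * M ω i ∂μ = 0) ∧ (∀ j, ∫ ω, ψ ω * L ω j ∂μ = 0) :=
  new_error_uncorrelated_general Γ Sε μ U ε hUU hεε hUε hEUU hEεε hEUε M hM hinv Δ hΔ L hL η hηU hηε
    hEηU hEηε φ ψ hψ
end

section
/- Under the linear structural outcome model and the mediator model, the natural indirect effect through the j-th mediator equals β_{2j} E[g_j(z, X) − g_j(z', X)]: for any z, z' ∈ ℝ and any index j, E[Y(z, M_j→(z))] − E[Y(z, M_j→(z'))] = β_{2j} (E[g_j(z, X)] − E[g_j(z', X)]), where M_j→(z'') denotes the mediator vector M(z') with its j-th coordinate replaced by the j-th coordinate of M(z''). -/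
/-! Pointwise, the two potential outcomes differ only through the `j`-th mediator coordinate,
by `β₂ j * (M z ω j - M z' ω j)`; in that difference the shared noise `(Γ U + ε) j` cancels,
leaving `β₂ j * (g z (X ω) j - g z' (X ω) j)`, and linearity of the integral concludes. -/

open MeasureTheory Matrix

theorem dotProduct_update_sub_dotProduct_update {ι R : Type*} [Fintype ι] [DecidableEq ι]
    [CommRing R] (v x : ι → R) (j : ι) (a b : R) :
    v ⬝ᵥ Function.update x j a - v ⬝ᵥ Function.update x j b = v j * (a - b) := by
  rw [← dotProduct_sub, ← Function.update_sub, sub_self, ← Pi.single, dotProduct_single]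

section Integrability

variable {Ω ι : Type*} [MeasurableSpace Ω] {μ : Measure Ω}

theorem integrable_dotProduct [Fintype ι] (v : ι → ℝ) {f : Ω → ι → ℝ}
    (hf : ∀ i, Integrable (fun ω => f ω i) μ) : Integrable (fun ω => v ⬝ᵥ f ω) μ := by
  simpa only [dotProduct] using integrable_finsetSum _ fun i _ => (hf i).const_mul (v i)

theorem integrable_mulVec_apply [Fintype ι] {κ : Type*} (A : Matrix κ ι ℝ) {f : Ω → ι → ℝ}
    (hf : ∀ i, Integrable (fun ω => f ω i) μ) (k : κ) :
    Integrable (fun ω => (A *ᵥ f ω) k) μ :=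
  integrable_dotProduct (A k) hf

theorem integrable_update_apply {E : Type*} [NormedAddCommGroup E] [DecidableEq ι]
    {f : Ω → ι → E} {a : Ω → E} (hf : ∀ i, Integrable (fun ω => f ω i) μ)
    (ha : Integrable a μ) (j i : ι) :
    Integrable (fun ω => Function.update (f ω) j (a ω) i) μ := by
  obtain rfl | hij := eq_or_ne i j
  · simpa only [Function.update_self] using ha
  · simpa only [Function.update_of_ne hij] using hf i

end Integrability

theorem natural_indirect_effect_single_mediator_general
    {p q t : ℕ} (β₀ β₁ : ℝ) (β₂ : Fin p → ℝ) (β₃ : Fin q → ℝ) (φ : Fin t → ℝ)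
    (Γ : Matrix (Fin p) (Fin t) ℝ)
    {Ω : Type*} [MeasurableSpace Ω] (μ : Measure Ω) [IsProbabilityMeasure μ]
    (X : Ω → Fin q → ℝ) (U : Ω → Fin t → ℝ) (ε : Ω → Fin p → ℝ) (η : Ω → ℝ)
    (hX : ∀ i, Integrable (fun ω => X ω i) μ)
    (hU : ∀ i, Integrable (fun ω => U ω i) μ)
    (hε : ∀ i, Integrable (fun ω => ε ω i) μ)
    (hη : Integrable η μ)
    (Y : ℝ → (Ω → Fin p → ℝ) → Ω → ℝ)
    (hY : ∀ z m ω, Y z m ω = β₀ + β₁ * z + β₂ ⬝ᵥ m ω + β₃ ⬝ᵥ X ω + φ ⬝ᵥ U ω + η ω)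
    (g : ℝ → (Fin q → ℝ) → Fin p → ℝ)
    (hg : ∀ z i, Integrable (fun ω => g z (X ω) i) μ)
    (M : ℝ → Ω → Fin p → ℝ)
    (hM : ∀ z ω, M z ω = g z (X ω) + Γ *ᵥ U ω + ε ω)
    (z z' : ℝ) (j : Fin p)
    (Mj : ℝ → Ω → Fin p → ℝ)
    (hMj : ∀ z'' ω, Mj z'' ω = Function.update (M z' ω) j (M z'' ω j)) :
    (∫ ω, Y z (Mj z) ω ∂μ) - (∫ ω, Y z (Mj z') ω ∂μ) =
      β₂ j * ((∫ ω, g z (X ω) j ∂μ) - ∫ ω, g z' (X ω) j ∂μ) := by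
  have hM_int (z'' : ℝ) (i : Fin p) : Integrable (fun ω => M z'' ω i) μ := by
    simp only [hM, Pi.add_apply]
    exact ((hg z'' i).add (integrable_mulVec_apply Γ hU i)).add (hε i)
  have hY_int (z'' : ℝ) : Integrable (Y z (Mj z'')) μ := by
    have hMj_int := integrable_update_apply (hM_int z') (hM_int z'' j) j
    simp only [funext (hY z (Mj z'')), hMj]
    exact ((((integrable_const _).add (integrable_dotProduct β₂ hMj_int)).add
      (integrable_dotProduct β₃ hX)).add (integrable_dotProduct φ hU)).add hη
  have h_diff (ω : Ω) : Y z (Mj z) ω - Y z (Mj z') ω = β₂ j * (g z (X ω) j - g z' (X ω) j) := by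
    calc Y z (Mj z) ω - Y z (Mj z') ω = β₂ ⬝ᵥ Mj z ω - β₂ ⬝ᵥ Mj z' ω := by rw [hY, hY]; ring
      _ = β₂ j * (M z ω j - M z' ω j) := by
        rw [hMj, hMj, dotProduct_update_sub_dotProduct_update]
      _ = β₂ j * (g z (X ω) j - g z' (X ω) j) := by simp only [hM, Pi.add_apply]; ring
  rw [← integral_sub (hY_int z) (hY_int z'), integral_congr_ae (.of_forall h_diff),
    integral_const_mul, integral_sub (hg z j) (hg z' j)]

/-- The natural indirect effect through the j-th mediator equals
β_{2j} (E[g_j(z,X)] − E[g_j(z',X)]), where M_j→(z'') is M(z') with its j-th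
coordinate replaced by the j-th coordinate of M(z''). -/
theorem natural_indirect_effect_single_mediator
    {p q t : ℕ} (β₀ β₁ : ℝ) (β₂ : Fin p → ℝ) (β₃ : Fin q → ℝ) (φ : Fin t → ℝ)
    (Γ : Matrix (Fin p) (Fin t) ℝ)
    {Ω : Type*} [MeasurableSpace Ω] (μ : Measure Ω) [IsProbabilityMeasure μ]
    (X : Ω → Fin q → ℝ) (U : Ω → Fin t → ℝ) (ε : Ω → Fin p → ℝ) (η : Ω → ℝ)
    (hX : ∀ i, Integrable (fun ω => X ω i) μ)
    (hU : ∀ i, Integrable (fun ω => U ω i) μ)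
    (hε : ∀ i, Integrable (fun ω => ε ω i) μ)
    (hη : Integrable η μ)
    (hEU : ∀ i, ∫ ω, U ω i ∂μ = 0)
    (hEε : ∀ i, ∫ ω, ε ω i ∂μ = 0)
    (Y : ℝ → (Ω → Fin p → ℝ) → Ω → ℝ)
    (hY : ∀ z m ω, Y z m ω = β₀ + β₁ * z + β₂ ⬝ᵥ m ω + β₃ ⬝ᵥ X ω + φ ⬝ᵥ U ω + η ω)
    (g : ℝ → (Fin q → ℝ) → Fin p → ℝ)
    (hg : ∀ z i, Integrable (fun ω => g z (X ω) i) μ)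
    (M : ℝ → Ω → Fin p → ℝ)
    (hM : ∀ z ω, M z ω = g z (X ω) + Γ *ᵥ U ω + ε ω)
    (z z' : ℝ) (j : Fin p)
    (Mj : ℝ → Ω → Fin p → ℝ)
    (hMj : ∀ z'' ω, Mj z'' ω = Function.update (M z' ω) j (M z'' ω j)) :
    (∫ ω, Y z (Mj z) ω ∂μ) - (∫ ω, Y z (Mj z') ω ∂μ) =
      β₂ j * ((∫ ω, g z (X ω) j ∂μ) - ∫ ω, g z' (X ω) j ∂μ) :=
  natural_indirect_effect_single_mediator_general β₀ β₁ β₂ β₃ φ Γ μ X U ε η hX hU hε hη Y hY g hg M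
    hM z z' j Mj hMj
end

section
/- Let W : Ω → ℝ^s and L : Ω → ℝ^t be random vectors with all entries of the products W Wᵀ, W Lᵀ, L Lᵀ integrable, and let R = (Wᵀ, Lᵀ)ᵀ denote the concatenated random vector with H = E[R Rᵀ]. For any orthogonal t×t matrix A, let R_A = (Wᵀ, (A L)ᵀ)ᵀ and H_A = E[R_A R_Aᵀ]. Then H_A = P H Pᵀ where P is the block-diagonal matrix fromBlocks(I_s, 0, 0, A), and H_A is invertible if and only if H is invertible. In particular, the full-rank identification condition on H holds for one rotation of L if and only if it holds for every rotation of L. -/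
open MeasureTheory Matrix

/-! The rotated vector is a linear image `R_A = P R` of `R`, and second moments transform
by congruence under linear maps, so `H_A = P H Pᵀ`. Since `A` is orthogonal, `det P = det A`
is a unit, hence `det H_A = (det P)² det H` is a unit exactly when `det H` is. -/

section SecondMoment

variable {Ω ι κ : Type*} [MeasurableSpace Ω] [Fintype ι]

noncomputable def secondMoment (μ : Measure Ω) (X : Ω → ι → ℝ) : Matrix ι ι ℝ :=
  Matrix.of fun i j => ∫ ω, X ω i * X ω j ∂μ

theorem secondMoment_mulVec (μ : Measure Ω) {X : Ω → ι → ℝ}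
    (hX : ∀ i j, Integrable (fun ω => X ω i * X ω j) μ) (P : Matrix κ ι ℝ) :
    secondMoment μ (fun ω => P *ᵥ X ω) = P * secondMoment μ X * Pᵀ := by
  ext i j
  have expand : ∀ ω, (P *ᵥ X ω) i * (P *ᵥ X ω) j
      = ∑ k, ∑ l, P i k * P j l * (X ω k * X ω l) := fun ω => by
    simp only [mulVec, dotProduct, Finset.sum_mul_sum]
    exact Finset.sum_congr rfl fun k _ => Finset.sum_congr rfl fun l _ => by ring
  calc secondMoment μ (fun ω => P *ᵥ X ω) i j
      = ∑ k, ∑ l, P i k * P j l * ∫ ω, X ω k * X ω l ∂μ := by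
        simp only [secondMoment, of_apply, expand]
        rw [integral_finsetSum _ fun k _ => integrable_finsetSum _ fun l _ =>
          (hX k l).const_mul _]
        refine Finset.sum_congr rfl fun k _ => ?_
        rw [integral_finsetSum _ fun l _ => (hX k l).const_mul _]
        simp only [integral_const_mul]
    _ = (P * secondMoment μ X * Pᵀ) i j := by
        simp only [mul_apply, transpose_apply, secondMoment, of_apply, Finset.sum_mul]
        rw [Finset.sum_comm]
        exact Finset.sum_congr rfl fun k _ => Finset.sum_congr rfl fun l _ => by ring

end SecondMoment

theorem integrable_sumElim_mul {Ω m n : Type*} [MeasurableSpace Ω] {μ : Measure Ω}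
    {W : Ω → m → ℝ} {L : Ω → n → ℝ}
    (hWW : ∀ i j, Integrable (fun ω => W ω i * W ω j) μ)
    (hWL : ∀ i j, Integrable (fun ω => W ω i * L ω j) μ)
    (hLL : ∀ i j, Integrable (fun ω => L ω i * L ω j) μ) (i j : m ⊕ n) :
    Integrable (fun ω => Sum.elim (W ω) (L ω) i * Sum.elim (W ω) (L ω) j) μ := by
  rcases i with a | a <;> rcases j with b | b
  · exact hWW a b
  · exact hWL a b
  · simpa only [Sum.elim_inl, Sum.elim_inr, mul_comm] using hWL b a
  · exact hLL a b

theorem fromBlocks_one_zero_zero_mulVec_sumElim {m n α : Type*} [Fintype m] [Fintype n]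
    [DecidableEq m] [Semiring α] (A : Matrix n n α) (w : m → α) (v : n → α) :
    fromBlocks 1 0 0 A *ᵥ Sum.elim w v = Sum.elim w (A *ᵥ v) := by
  simp [fromBlocks_mulVec]

theorem isUnit_det_mul_mul_transpose_iff {n R : Type*} [Fintype n] [DecidableEq n]
    [CommRing R] {P : Matrix n n R} (hP : IsUnit P.det) (H : Matrix n n R) :
    IsUnit (P * H * Pᵀ).det ↔ IsUnit H.det := by
  simp only [det_mul, det_transpose, IsUnit.mul_iff, hP, true_and, and_true]

theorem rank_condition_rotation_invariance_general
    {s t : ℕ} {Ω : Type*} [MeasurableSpace Ω] (μ : Measure Ω)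
    (W : Ω → Fin s → ℝ) (L : Ω → Fin t → ℝ)
    (hWW : ∀ i j, Integrable (fun ω => W ω i * W ω j) μ)
    (hWL : ∀ i j, Integrable (fun ω => W ω i * L ω j) μ)
    (hLL : ∀ i j, Integrable (fun ω => L ω i * L ω j) μ)
    (R : Ω → (Fin s ⊕ Fin t) → ℝ) (hR : ∀ ω, R ω = Sum.elim (W ω) (L ω))
    (H : Matrix (Fin s ⊕ Fin t) (Fin s ⊕ Fin t) ℝ)
    (hH : ∀ i j, H i j = ∫ ω, R ω i * R ω j ∂μ)
    (A : Matrix (Fin t) (Fin t) ℝ) (hA₁ : A * Aᵀ = 1)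
    (RA : Ω → (Fin s ⊕ Fin t) → ℝ) (hRA : ∀ ω, RA ω = Sum.elim (W ω) (A *ᵥ L ω))
    (HA : Matrix (Fin s ⊕ Fin t) (Fin s ⊕ Fin t) ℝ)
    (hHA : ∀ i j, HA i j = ∫ ω, RA ω i * RA ω j ∂μ) :
    HA = (Matrix.fromBlocks 1 0 0 A) * H * (Matrix.fromBlocks 1 0 0 A)ᵀ ∧
      (IsUnit HA.det ↔ IsUnit H.det) := by
  have hH' : H = secondMoment μ R := Matrix.ext hH
  have hRA' : RA = fun ω => fromBlocks 1 0 0 A *ᵥ R ω := funext fun ω => by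
    rw [hRA, hR, fromBlocks_one_zero_zero_mulVec_sumElim]
  have hR_int : ∀ i j, Integrable (fun ω => R ω i * R ω j) μ := by
    simpa only [hR] using integrable_sumElim_mul hWW hWL hLL
  have hHA' : HA = fromBlocks 1 0 0 A * H * (fromBlocks 1 0 0 A)ᵀ := by
    rw [hH', ← secondMoment_mulVec μ hR_int, ← hRA']
    exact Matrix.ext hHA
  have hP : IsUnit (fromBlocks 1 0 0 A : Matrix (Fin s ⊕ Fin t) _ ℝ).det := by
    rw [det_fromBlocks_zero₂₁, det_one, one_mul]
    exact isUnit_det_of_right_inverse hA₁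
  exact ⟨hHA', hHA' ▸ isUnit_det_mul_mul_transpose_iff hP H⟩

/-- With R = (Wᵀ, Lᵀ)ᵀ, H = E[R Rᵀ], and R_A = (Wᵀ, (AL)ᵀ)ᵀ for an
orthogonal matrix A, one has H_A = P H Pᵀ with P = fromBlocks(I, 0, 0, A), and
H_A is invertible iff H is invertible. -/
theorem rank_condition_rotation_invariance
    {s t : ℕ} {Ω : Type*} [MeasurableSpace Ω] (μ : Measure Ω) [IsProbabilityMeasure μ]
    (W : Ω → Fin s → ℝ) (L : Ω → Fin t → ℝ)
    (hWW : ∀ i j, Integrable (fun ω => W ω i * W ω j) μ)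
    (hWL : ∀ i j, Integrable (fun ω => W ω i * L ω j) μ)
    (hLL : ∀ i j, Integrable (fun ω => L ω i * L ω j) μ)
    (R : Ω → (Fin s ⊕ Fin t) → ℝ) (hR : ∀ ω, R ω = Sum.elim (W ω) (L ω))
    (H : Matrix (Fin s ⊕ Fin t) (Fin s ⊕ Fin t) ℝ)
    (hH : ∀ i j, H i j = ∫ ω, R ω i * R ω j ∂μ)
    (A : Matrix (Fin t) (Fin t) ℝ) (hA₁ : A * Aᵀ = 1) (hA₂ : Aᵀ * A = 1)
    (RA : Ω → (Fin s ⊕ Fin t) → ℝ) (hRA : ∀ ω, RA ω = Sum.elim (W ω) (A *ᵥ L ω))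
    (HA : Matrix (Fin s ⊕ Fin t) (Fin s ⊕ Fin t) ℝ)
    (hHA : ∀ i j, HA i j = ∫ ω, RA ω i * RA ω j ∂μ) :
    HA = (Matrix.fromBlocks 1 0 0 A) * H * (Matrix.fromBlocks 1 0 0 A)ᵀ ∧
      (IsUnit HA.det ↔ IsUnit H.det) :=
  rank_condition_rotation_invariance_general μ W L hWW hWL hLL R hR H hH A hA₁ RA hRA HA hHA
end

section
/- Consider the two-step mediation-pathway selection procedure. Suppose: (a) P(Â_n = 𝒜) → 1 as n → ∞; (b) for every j ∈ 𝒜_act, P(R_{n,j}) → 1 as n → ∞; (c) for every j ∈ 𝒜 \ 𝒜_act, limsup_{n→∞} P(R_{n,j}) ≤ α_j. Define the random selected active set Â_{act,n}(ω) = {j ∈ Â_n(ω) : ω ∈ R_{n,j}}. Then liminf_{n→∞} P(Â_{act,n} = 𝒜_act) ≥ 1 − Σ_{j ∈ 𝒜 \ 𝒜_act} α_j. -/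
/-!
On the event that the first step selects exactly `𝒜`, every active null is rejected and no
inactive null in `𝒜` is rejected, the selected active set is exactly `𝒜_act`. The union bound
over the complementary events bounds the probability of the selected active set being `𝒜_act`
from below by `P(Â_n = 𝒜) - ∑_{𝒜_act} P(R_{n,j}ᶜ) - ∑_{𝒜 \ 𝒜_act} P(R_{n,j})`; the first two
terms tend to `1` and `0`, and the limsup of the last is at most `∑ α_j`.
-/

open MeasureTheory Filter Topology

lemma le_liminf_of_le_sub_sum {β ι : Type*} {l : Filter β} [l.NeBot] {s : Finset ι}
    {u a : β → ℝ} {b : β → ι → ℝ} {c : ℝ} {γ : ι → ℝ}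
    (hu : ∀ᶠ n in l, a n - ∑ j ∈ s, b n j ≤ u n) (hu_bdd : IsBoundedUnder (· ≤ ·) l u)
    (ha : Tendsto a l (𝓝 c)) (hb : ∀ j ∈ s, limsup (b · j) l ≤ γ j)
    (hb_bdd : ∀ j ∈ s, IsBoundedUnder (· ≤ ·) l (b · j)) :
    c - ∑ j ∈ s, γ j ≤ liminf u l := by
  refine le_of_forall_lt_imp_le_of_dense fun x hx => ?_
  -- split the gap `c - ∑ γ - x` evenly between `a` and the `#s` terms `b · j`
  set δ := (c - ∑ j ∈ s, γ j - x) / (s.card + 1) with hδ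
  have hδ_pos : 0 < δ := div_pos (by linarith) (by positivity)
  have hx_eq : x = c - δ - (∑ j ∈ s, γ j + s.card * δ) := by
    rw [hδ]; field_simp; ring
  have ha_ev : ∀ᶠ n in l, c - δ < a n := ha.eventually (lt_mem_nhds (by linarith))
  have hb_ev : ∀ᶠ n in l, ∀ j ∈ s, b n j < γ j + δ :=
    (eventually_all_finset s).2 fun j hj =>
      eventually_lt_of_limsup_lt ((hb j hj).trans_lt (lt_add_of_pos_right _ hδ_pos)) (hb_bdd j hj)
  refine le_liminf_of_le hu_bdd.isCoboundedUnder_ge ?_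
  filter_upwards [hu, ha_ev, hb_ev] with n hu_n ha_n hb_n
  have hsum : ∑ j ∈ s, b n j ≤ ∑ j ∈ s, γ j + s.card * δ := by
    calc ∑ j ∈ s, b n j ≤ ∑ j ∈ s, (γ j + δ) := Finset.sum_le_sum fun j hj => (hb_n j hj).le
      _ = ∑ j ∈ s, γ j + s.card * δ := by
        rw [Finset.sum_add_distrib, Finset.sum_const, nsmul_eq_mul]
  linarith

section Selection

variable {Ω ι : Type*}

def selectedActive (Ahat : Ω → Finset ι) (R : ι → Set Ω) (ω : Ω) : Set ι :=
  {j | j ∈ Ahat ω ∧ ω ∈ R j}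

variable [DecidableEq ι] {𝒜 𝒜act : Finset ι} {Ahat : Ω → Finset ι} {R : ι → Set Ω}

lemma inter_subset_selectedActive_eq (hsub : 𝒜act ⊆ 𝒜) :
    {ω | Ahat ω = 𝒜} ∩ (⋂ j ∈ 𝒜act, R j) ∩ ⋂ j ∈ 𝒜 \ 𝒜act, (R j)ᶜ ⊆
      {ω | selectedActive Ahat R ω = 𝒜act} := by
  rintro ω ⟨⟨hA, hact⟩, hinact⟩
  simp only [Set.mem_ofPred_eq, Set.mem_iInter, Set.mem_compl_iff] at hA hact hinact
  ext j
  simp only [selectedActive, Set.mem_ofPred_eq, hA, Finset.mem_coe]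
  constructor
  · rintro ⟨hj𝒜, hjR⟩
    by_contra hj
    exact hinact j (Finset.mem_sdiff.2 ⟨hj𝒜, hj⟩) hjR
  · exact fun hj => ⟨hsub hj, hact j hj⟩

lemma probReal_sub_sum_le_probReal_selectedActive_eq [MeasurableSpace Ω] {μ : Measure Ω}
    [IsProbabilityMeasure μ] (hsub : 𝒜act ⊆ 𝒜)
    (hA : MeasurableSet {ω | Ahat ω = 𝒜}) (hR : ∀ j ∈ 𝒜act, MeasurableSet (R j)) :
    μ.real {ω | Ahat ω = 𝒜} - ∑ j ∈ 𝒜act, (1 - μ.real (R j)) - ∑ j ∈ 𝒜 \ 𝒜act, μ.real (R j) ≤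
      μ.real {ω | selectedActive Ahat R ω = 𝒜act} := by
  set G := {ω | Ahat ω = 𝒜} ∩ (⋂ j ∈ 𝒜act, R j) ∩ ⋂ j ∈ 𝒜 \ 𝒜act, (R j)ᶜ
  have hG_compl : Gᶜ = {ω | Ahat ω = 𝒜}ᶜ ∪ (⋃ j ∈ 𝒜act, (R j)ᶜ) ∪ ⋃ j ∈ 𝒜 \ 𝒜act, R j := by
    simp only [G, Set.compl_inter, Set.compl_iInter, compl_compl]
  have h_union : 1 ≤ μ.real G + μ.real Gᶜ := by
    simpa using measureReal_union_le (μ := μ) G Gᶜ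
  have h_compl : μ.real Gᶜ ≤ (1 - μ.real {ω | Ahat ω = 𝒜}) + ∑ j ∈ 𝒜act, (1 - μ.real (R j)) +
      ∑ j ∈ 𝒜 \ 𝒜act, μ.real (R j) := by
    rw [hG_compl, ← probReal_compl_eq_one_sub hA,
      ← Finset.sum_congr rfl fun j hj => probReal_compl_eq_one_sub (hR j hj)]
    grw [measureReal_union_le, measureReal_union_le, measureReal_biUnion_finset_le,
      measureReal_biUnion_finset_le]
  have h_mono :=
    measureReal_mono (μ := μ) (inter_subset_selectedActive_eq (Ahat := Ahat) (R := R) hsub)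
  linarith

end Selection

theorem two_step_selection_consistency_general
    {Ω : Type*} [MeasurableSpace Ω] (μ : Measure Ω) [IsProbabilityMeasure μ]
    {p : ℕ} (𝒜 𝒜act : Finset (Fin p)) (hsub : 𝒜act ⊆ 𝒜)
    (Ahat : ℕ → Ω → Finset (Fin p)) (R : ℕ → Fin p → Set Ω)
    (α : Fin p → ℝ)
    (hmeasA : ∀ n, MeasurableSet {ω | Ahat n ω = 𝒜})
    (hmeasR : ∀ n j, MeasurableSet (R n j))
    (ha : Tendsto (fun n => (μ {ω | Ahat n ω = 𝒜}).toReal) atTop (nhds 1))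
    (hb : ∀ j ∈ 𝒜act, Tendsto (fun n => (μ (R n j)).toReal) atTop (nhds 1))
    (hc : ∀ j ∈ 𝒜 \ 𝒜act, limsup (fun n => (μ (R n j)).toReal) atTop ≤ α j) :
    (1 - ∑ j ∈ 𝒜 \ 𝒜act, α j) ≤
      liminf (fun n =>
        (μ {ω | {j | j ∈ Ahat n ω ∧ ω ∈ R n j} = (𝒜act : Set (Fin p))}).toReal)
        atTop := by
  have h_good : Tendsto (fun n => μ.real {ω | Ahat n ω = 𝒜} -
      ∑ j ∈ 𝒜act, (1 - μ.real (R n j))) atTop (𝓝 1) := by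
    have h := ha.sub <|
      tendsto_finsetSum 𝒜act fun j hj => tendsto_const_nhds (x := (1 : ℝ)).sub (hb j hj)
    rwa [sub_self, Finset.sum_const_zero, sub_zero] at h
  refine le_liminf_of_le_sub_sum (b := fun n j => μ.real (R n j))
    (Eventually.of_forall fun n => probReal_sub_sum_le_probReal_selectedActive_eq hsub (hmeasA n)
      fun j _ => hmeasR n j)
    (isBoundedUnder_of ⟨1, fun _ => measureReal_le_one⟩) h_good hc
    fun _ _ => isBoundedUnder_of ⟨1, fun _ => measureReal_le_one⟩

/-- Corollary 1: Consistency of the two-step mediation-pathway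
selection procedure: if P(Â_n = 𝒜) → 1, the rejection probability of each truly
active pathway tends to 1, and the limsup rejection probability of each inactive
pathway in 𝒜 is at most α_j, then
liminf P(Â_{act,n} = 𝒜_act) ≥ 1 − Σ_{j ∈ 𝒜 \ 𝒜_act} α_j. -/
theorem two_step_selection_consistency
    {Ω : Type*} [MeasurableSpace Ω] (μ : Measure Ω) [IsProbabilityMeasure μ]
    {p : ℕ} (𝒜 𝒜act : Finset (Fin p)) (hsub : 𝒜act ⊆ 𝒜)
    (Ahat : ℕ → Ω → Finset (Fin p)) (R : ℕ → Fin p → Set Ω)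
    (α : Fin p → ℝ) (hα0 : ∀ j, 0 ≤ α j) (hα1 : ∀ j, α j ≤ 1)
    (hmeasA : ∀ n, MeasurableSet {ω | Ahat n ω = 𝒜})
    (hmeasR : ∀ n j, MeasurableSet (R n j))
    (ha : Tendsto (fun n => (μ {ω | Ahat n ω = 𝒜}).toReal) atTop (nhds 1))
    (hb : ∀ j ∈ 𝒜act, Tendsto (fun n => (μ (R n j)).toReal) atTop (nhds 1))
    (hc : ∀ j ∈ 𝒜 \ 𝒜act, limsup (fun n => (μ (R n j)).toReal) atTop ≤ α j) :
    (1 - ∑ j ∈ 𝒜 \ 𝒜act, α j) ≤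
      liminf (fun n =>
        (μ {ω | {j | j ∈ Ahat n ω ∧ ω ∈ R n j} = (𝒜act : Set (Fin p))}).toReal)
        atTop :=
  two_step_selection_consistency_general μ 𝒜 𝒜act hsub Ahat R α hmeasA hmeasR ha hb hc
end
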